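/- arXiv:1207.3674 — 5 statements merged into one kernel-verified Lean document; each statement's English description precedes it below -/
import Mathlib

section
/- Krull–Remak–Schmidt–Azumaya uniqueness of interval decompositions: let T ⊆ ℝ and let V be a persistence module over T admitting two decompositions into interval modules, V ≅ ⊕_{ℓ∈L} I^{J_ℓ} and V ≅ ⊕_{m∈M} I^{K_m}. Then there is a bijection σ : L → M such that J_ℓ = K_{σ(ℓ)} for all ℓ ∈ L. -/
attribute [local instance] Classical.propDecidable

structure PersMod (k : Type) [Field k] (T : Type) [Preorder T] where
  space : T → Type
  [addCommGroup : ∀ t, AddCommGroup (space t)]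
  [module : ∀ t, Module k (space t)]
  map : ∀ s t : T, s ≤ t → space s →ₗ[k] space t
  map_id : ∀ t, map t t le_rfl = LinearMap.id
  map_comp : ∀ r s t (h1 : r ≤ s) (h2 : s ≤ t),
    (map s t h2).comp (map r s h1) = map r t (h1.trans h2)

attribute [instance] PersMod.addCommGroup PersMod.module

def PersIso {k : Type} [Field k] {T : Type} [Preorder T] (U V : PersMod k T) : Prop :=
  ∃ e : ∀ t, U.space t ≃ₗ[k] V.space t,
    ∀ s t (h : s ≤ t),
      (e t).toLinearMap.comp (U.map s t h) = (V.map s t h).comp (e s).toLinearMap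

def IsIntervalSet {T : Type} [Preorder T] (J : Set T) : Prop :=
  J.Nonempty ∧ ∀ ⦃r s t : T⦄, r ∈ J → t ∈ J → r ≤ s → s ≤ t → s ∈ J

noncomputable def intervalModule (k : Type) [Field k] (T : Type) [Preorder T]
    (J : Set T) (hJ : IsIntervalSet J) : PersMod k T where
  space t := PLift (t ∈ J) → k
  addCommGroup := fun _ => inferInstance
  module := fun _ => inferInstance
  map s t _ :=
    { toFun := fun f _ => if hs : s ∈ J then f ⟨hs⟩ else 0
      map_add' := fun f g => by
        funext ht; by_cases hs : s ∈ J <;> simp [hs]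
      map_smul' := fun c f => by
        funext ht; by_cases hs : s ∈ J <;> simp [hs] }
  map_id t := by
    refine LinearMap.ext fun f => funext fun ht => ?_
    show (if hs : t ∈ J then f ⟨hs⟩ else 0) = f ht
    rw [dif_pos ht.down]
  map_comp r s t h1 h2 := by
    refine LinearMap.ext fun f => funext fun ht => ?_
    show (if hs : s ∈ J then (if hr : r ∈ J then f ⟨hr⟩ else 0) else 0)
        = (if hr : r ∈ J then f ⟨hr⟩ else 0)
    by_cases hr : r ∈ J
    · have hs : s ∈ J := hJ.2 hr ht.down h1 h2
      simp [hr, hs]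
    · by_cases hs : s ∈ J <;> simp [hr, hs]

noncomputable def dsum {k : Type} [Field k] {T : Type} [Preorder T] {L : Type}
    (V : L → PersMod k T) : PersMod k T where
  space t := DFinsupp (fun ℓ => (V ℓ).space t)
  addCommGroup := fun _ => inferInstance
  module := fun _ => inferInstance
  map s t h := DFinsupp.mapRange.linearMap (fun ℓ => (V ℓ).map s t h)
  map_id t := by
    show DFinsupp.mapRange.linearMap (fun ℓ => (V ℓ).map t t le_rfl) = LinearMap.id
    have : (fun ℓ => (V ℓ).map t t le_rfl)
        = fun ℓ => (LinearMap.id : (V ℓ).space t →ₗ[k] (V ℓ).space t) :=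
      funext fun ℓ => (V ℓ).map_id t
    rw [this]
    exact DFinsupp.mapRange.linearMap_id
  map_comp r s t h1 h2 := by
    show (DFinsupp.mapRange.linearMap (fun ℓ => (V ℓ).map s t h2)).comp
        (DFinsupp.mapRange.linearMap (fun ℓ => (V ℓ).map r s h1))
      = DFinsupp.mapRange.linearMap (fun ℓ => (V ℓ).map r t (h1.trans h2))
    rw [← DFinsupp.mapRange.linearMap_comp]
    congr 1
    funext ℓ
    exact (V ℓ).map_comp r s t h1 h2

open scoped ENNReal

section Dim

noncomputable def edim (k : Type) [Field k] (M : Type) [AddCommGroup M] [Module k M] : ℕ∞ :=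
  Cardinal.toENat (Module.rank k M)

noncomputable def erank {k : Type} [Field k] {M N : Type} [AddCommGroup M] [Module k M]
    [AddCommGroup N] [Module k N] (f : M →ₗ[k] N) : ℕ∞ :=
  edim k (LinearMap.range f)

noncomputable def ecard (S : Type) : ℕ∞ := Cardinal.toENat (Cardinal.mk S)

end Dim

section Matchings

noncomputable def eDiff (x y : EReal) : ℝ≥0∞ :=
  if x = y then 0
  else if x = ⊤ ∨ x = ⊥ ∨ y = ⊤ ∨ y = ⊥ then ⊤
  else ENNReal.ofReal |x.toReal - y.toReal|

noncomputable def dPt (α β : EReal × EReal) : ℝ≥0∞ :=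
  max (eDiff α.1 β.1) (eDiff α.2 β.2)

noncomputable def diagDist (α : EReal × EReal) : ℝ≥0∞ :=
  if α.1 = ⊥ ∨ α.2 = ⊤ then ⊤ else ENNReal.ofReal ((α.2.toReal - α.1.toReal) / 2)

def IsMatching {α β : Type} (M : Set (α × β)) : Prop :=
  (∀ a b b', (a, b) ∈ M → (a, b') ∈ M → b = b') ∧
  (∀ a a' b, (a, b) ∈ M → (a', b) ∈ M → a = a')

def IsDeltaMatching {α β : Type} (A : α → EReal × EReal) (B : β → EReal × EReal)
    (δ : ℝ≥0∞) : Prop :=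
  ∃ M : Set (α × β), IsMatching M ∧
    (∀ p ∈ M, dPt (A p.1) (B p.2) ≤ δ) ∧
    (∀ a, (∀ b, (a, b) ∉ M) → diagDist (A a) ≤ δ) ∧
    (∀ b, (∀ a, (a, b) ∉ M) → diagDist (B b) ≤ δ)

noncomputable def dBottle {α β : Type} (A : α → EReal × EReal) (B : β → EReal × EReal) : ℝ≥0∞ :=
  sInf {d : ℝ≥0∞ | ∃ δ : ℝ, 0 ≤ δ ∧ IsDeltaMatching A B (ENNReal.ofReal δ) ∧ d = ENNReal.ofReal δ}

end Matchings

section Measure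

noncomputable def persIm {k : Type} [Field k] (V : PersMod k ℝ) (a : EReal) (c : ℝ) :
    Submodule k (V.space c) :=
  if h : ∃ a' : ℝ, a = (a' : EReal) ∧ a' ≤ c then
    LinearMap.range (V.map h.choose c h.choose_spec.2)
  else ⊥

noncomputable def persKer {k : Type} [Field k] (V : PersMod k ℝ) (c : ℝ) (d : EReal) :
    Submodule k (V.space c) :=
  if h : ∃ d' : ℝ, d = (d' : EReal) ∧ c ≤ d' then
    LinearMap.ker (V.map c h.choose h.choose_spec.2)
  else ⊤

noncomputable def persMeasure {k : Type} [Field k] (V : PersMod k ℝ)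
    (a : EReal) (b c : ℝ) (d : EReal) : ℕ∞ :=
  edim k
    (↥(persIm V (b : EReal) c ⊓ persKer V c d) ⧸
      Submodule.comap (persIm V (b : EReal) c ⊓ persKer V c d).subtype
        (persIm V a c ⊓ persKer V c d))

end Measure

section Interleaving

def Interleaved (k : Type) [Field k] (U V : PersMod k ℝ) (δ : ℝ) : Prop :=
  ∃ (φ : ∀ t : ℝ, U.space t →ₗ[k] V.space (t + δ))
    (ψ : ∀ t : ℝ, V.space t →ₗ[k] U.space (t + δ)),
    (∀ s t (h : s ≤ t),
      (φ t).comp (U.map s t h) = (V.map (s + δ) (t + δ) (by linarith)).comp (φ s)) ∧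
    (∀ s t (h : s ≤ t),
      (ψ t).comp (V.map s t h) = (U.map (s + δ) (t + δ) (by linarith)).comp (ψ s)) ∧
    (∀ t (h : t ≤ t + δ + δ), (ψ (t + δ)).comp (φ t) = U.map t (t + δ + δ) h) ∧
    (∀ t (h : t ≤ t + δ + δ), (φ (t + δ)).comp (ψ t) = V.map t (t + δ + δ) h)

noncomputable def dInter (k : Type) [Field k] (U V : PersMod k ℝ) : ℝ≥0∞ :=
  sInf {d : ℝ≥0∞ | ∃ δ : ℝ, 0 ≤ δ ∧ Interleaved k U V δ ∧ d = ENNReal.ofReal δ}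

def QTame (k : Type) [Field k] (V : PersMod k ℝ) : Prop :=
  ∀ s t : ℝ, ∀ h : s < t, erank (V.map s t h.le) ≠ ⊤

def LocFinitePM (k : Type) [Field k] (W : PersMod k ℝ) : Prop :=
  ∃ (L : Type) (J : L → Set ℝ) (hJ : ∀ ℓ, IsIntervalSet (J ℓ)),
    PersIso W (dsum fun ℓ => intervalModule k ℝ (J ℓ) (hJ ℓ)) ∧
    ∀ S : Set ℝ, Bornology.IsBounded S → {ℓ : L | (J ℓ ∩ S).Nonempty}.Finite

noncomputable def zeroPers (k : Type) [Field k] : PersMod k ℝ where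
  space _ := PUnit
  addCommGroup := fun _ => inferInstance
  module := fun _ => inferInstance
  map _ _ _ := 0
  map_id t := LinearMap.ext fun x => Subsingleton.elim _ _
  map_comp r s t h1 h2 := LinearMap.ext fun x => Subsingleton.elim _ _

noncomputable def smoothing {k : Type} [Field k] (V : PersMod k ℝ) (ε : ℝ) (hε : 0 < ε) :
    PersMod k ℝ where
  space t := LinearMap.range (V.map (t - ε) (t + ε) (by linarith))
  addCommGroup := fun _ => inferInstance
  module := fun _ => inferInstance
  map s t h := LinearMap.restrict (V.map (s + ε) (t + ε) (by linarith))
    (p := LinearMap.range (V.map (s - ε) (s + ε) (by linarith)))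
    (q := LinearMap.range (V.map (t - ε) (t + ε) (by linarith)))
    (by
      rintro x ⟨y, rfl⟩
      refine ⟨V.map (s - ε) (t - ε) (by linarith) y, ?_⟩
      have h1 := LinearMap.congr_fun
        (V.map_comp (s - ε) (t - ε) (t + ε) (by linarith) (by linarith)) y
      have h2 := LinearMap.congr_fun
        (V.map_comp (s - ε) (s + ε) (t + ε) (by linarith) (by linarith)) y
      simp only [LinearMap.comp_apply] at h1 h2
      rw [h1, h2])
  map_id t := by
    refine LinearMap.ext fun x => Subtype.ext ?_
    have := LinearMap.congr_fun (V.map_id (t + ε)) x.1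
    simpa [LinearMap.restrict_apply] using this
  map_comp r s t h1 h2 := by
    refine LinearMap.ext fun x => Subtype.ext ?_
    have := LinearMap.congr_fun
      (V.map_comp (r + ε) (s + ε) (t + ε) (by linarith) (by linarith)) x.1
    simpa [LinearMap.restrict_apply] using this

end Interleaving

section Webb

def webbSubmodule (k : Type) [Field k] (t : ℤ) : Submodule k (ℕ → k) where
  carrier := {x | ∀ i : ℕ, (i : ℤ) < -t → x i = 0}
  add_mem' := by
    intro x y hx hy i hi
    simp [Pi.add_apply, hx i hi, hy i hi]
  zero_mem' := by
    intro i hi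
    rfl
  smul_mem' := by
    intro c x hx i hi
    simp [Pi.smul_apply, hx i hi]

noncomputable def webbModule (k : Type) [Field k] : PersMod k ↥{n : ℤ | n ≤ 0} where
  space t := ↥(webbSubmodule k t.1)
  addCommGroup := fun _ => inferInstance
  module := fun _ => inferInstance
  map s t h := Submodule.inclusion (by
    intro x hx
    have hx' : ∀ i : ℕ, (i : ℤ) < -s.1 → x i = 0 := hx
    intro i hi
    exact hx' i (lt_of_lt_of_le hi (neg_le_neg h)))
  map_id t := LinearMap.ext fun x => rfl
  map_comp r s t h1 h2 := LinearMap.ext fun x => rfl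

end Webb

section Decorated

/-- `decMem t x` : the real number `t` belongs to the interval described by the
decorated pair `x = ((p, εp), (q, εq))`, where the decoration `false` means `⁻`
and `true` means `⁺`. -/
def decMem (t : ℝ) (x : (EReal × Bool) × (EReal × Bool)) : Prop :=
  (x.1.1 < (t : EReal) ∨ (x.1.1 = (t : EReal) ∧ x.1.2 = false)) ∧
  ((t : EReal) < x.2.1 ∨ ((t : EReal) = x.2.1 ∧ x.2.2 = true))

/-- A valid decorated pair: the left coordinate is `p⁻`/`p⁺` for a real `p` or `−∞⁺`,
the right coordinate is `q⁻`/`q⁺` for a real `q` or `+∞⁻`, and the corresponding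
interval is nonempty (i.e. `p* < q*`). -/
def ValidDec (x : (EReal × Bool) × (EReal × Bool)) : Prop :=
  (x.1.1 = ⊥ → x.1.2 = true) ∧ x.1.1 ≠ ⊤ ∧ (x.2.1 = ⊤ → x.2.2 = false) ∧ x.2.1 ≠ ⊥ ∧
  {t : ℝ | decMem t x}.Nonempty

/-- The decorated pair `x` belongs to the rectangle `[a,b] × [c,d]`, i.e.
`[b,c] ⊆ ⟨p*,q*⟩ ⊆ (a,d)`. -/
def decInRect (x : (EReal × Bool) × (EReal × Bool)) (a : EReal) (b c : ℝ) (d : EReal) : Prop :=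
  (∀ t ∈ Set.Icc b c, decMem t x) ∧
  (∀ t : ℝ, decMem t x → a < (t : EReal) ∧ (t : EReal) < d)

/-- `Dgm` is (a labelling of) the decorated persistence diagram of `V`. -/
def IsDgmOf {k : Type} [Field k] (V : PersMod k ℝ) {ι : Type}
    (Dgm : ι → (EReal × Bool) × (EReal × Bool)) : Prop :=
  (∀ i, ValidDec (Dgm i)) ∧
  ∀ (a : EReal) (b c : ℝ) (d : EReal), a < (b : EReal) → b ≤ c → (c : EReal) < d →
    persMeasure V a b c d = ecard {i : ι // decInRect (Dgm i) a b c d}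

end Decorated

section RMeasure

/-- `[a,b] × [c,d]` is a (nondegenerate) rectangle contained in `D`. -/
def RectIn (D : Set (ℝ × ℝ)) (a b c d : ℝ) : Prop :=
  a < b ∧ c < d ∧ Set.Icc a b ×ˢ Set.Icc c d ⊆ D

/-- An r-measure on `D`: additivity under horizontal and vertical splitting. -/
def IsRMeasure (D : Set (ℝ × ℝ)) (μ : ℝ → ℝ → ℝ → ℝ → ℕ∞) : Prop :=
  (∀ a p b c d, a < p → p < b → RectIn D a b c d → μ a b c d = μ a p c d + μ p b c d) ∧
  (∀ a b c q d, c < q → q < d → RectIn D a b c d → μ a b c d = μ a b c q + μ a b q d)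

/-- Membership of a decorated point of the plane (`Bool` decoration: `true` = `⁺`,
`false` = `⁻`) in the closed rectangle `[a,b] × [c,d]`. -/
def dptMem (x : (ℝ × Bool) × (ℝ × Bool)) (a b c d : ℝ) : Prop :=
  a ≤ x.1.1 ∧ x.1.1 ≤ b ∧ c ≤ x.2.1 ∧ x.2.1 ≤ d ∧
  (x.1.1 = a → x.1.2 = true) ∧ (x.1.1 = b → x.1.2 = false) ∧
  (x.2.1 = c → x.2.2 = true) ∧ (x.2.1 = d → x.2.2 = false)

/-- The r-interior `D•` of `D`: decorated points contained in some rectangle of `D`. -/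
def rInt (D : Set (ℝ × ℝ)) : Set ((ℝ × Bool) × (ℝ × Bool)) :=
  {x | ∃ a b c d, RectIn D a b c d ∧ dptMem x a b c d}

/-- The number of decorated points, counted with multiplicity `m`, lying in the
rectangle `[a,b] × [c,d]`. -/
noncomputable def dcount (m : (ℝ × Bool) × (ℝ × Bool) → ℕ) (a b c d : ℝ) : ℕ∞ :=
  ecard (Σ x : {x : (ℝ × Bool) × (ℝ × Bool) // dptMem x a b c d}, Fin (m x.1))

end RMeasure

/-!
Fix an interval `J₀` and a point `t₀ ∈ J₀`. The number of summands `I^{J₀}` in an interval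
decomposition of `V` can be read off `V` itself, as the dimension of `A / (A ∩ B)` at `t₀`: here
`A` (`imKerInf`) is the intersection of the images of the maps from points of `J₀` below `t₀` and
the kernels of the maps to points outside `J₀` above `t₀`, while `B` (`imKerSup`) is the sum of the
images from points outside `J₀` and the kernels to points of `J₀`. An isomorphism of persistence
modules carries `A` and `B` onto their counterparts. In a direct sum of interval modules all of
these are coordinate subspaces, and since `T` is totally ordered, the coordinates surviving in
`A / (A ∩ B)` are exactly the `ℓ` with `J ℓ = J₀`. Hence the fibres of `J` and `K` over every
interval have the same cardinality, and fibrewise bijections glue to `σ`.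
-/

namespace DFinsupp

section Supported

variable (R : Type*) {ι : Type*} (M : ι → Type*) [Semiring R] [∀ i, AddCommMonoid (M i)]
  [∀ i, Module R (M i)]

def supported (S : Set ι) : Submodule R (Π₀ i, M i) where
  carrier := {x | ∀ i ∉ S, x i = 0}
  add_mem' hx hy i hi := by rw [add_apply, hx i hi, hy i hi, add_zero]
  zero_mem' i _ := zero_apply i
  smul_mem' c x hx i hi := by rw [smul_apply, hx i hi, smul_zero]

variable {R M} {N : ι → Type*} [∀ i, AddCommMonoid (N i)] [∀ i, Module R (N i)]

theorem mem_supported {S : Set ι} {x : Π₀ i, M i} : x ∈ supported R M S ↔ ∀ i ∉ S, x i = 0 :=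
  Iff.rfl

theorem supported_mono {S S' : Set ι} (h : S ⊆ S') : supported R M S ≤ supported R M S' :=
  fun _ hx i hi => hx i fun hS => hi (h hS)

theorem supported_inf_supported (S S' : Set ι) :
    supported R M S ⊓ supported R M S' = supported R M (S ∩ S') := by
  ext x
  simp only [Submodule.mem_inf, mem_supported, Set.mem_inter_iff, not_and_or]
  exact ⟨fun h i hi => hi.elim (h.1 i) (h.2 i),
    fun h => ⟨fun i hi => h i (Or.inl hi), fun i hi => h i (Or.inr hi)⟩⟩

theorem iInf_supported {κ : Sort*} (S : κ → Set ι) :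
    ⨅ j, supported R M (S j) = supported R M (⋂ j, S j) := by
  ext x
  simp only [Submodule.mem_iInf, mem_supported, Set.mem_iInter, not_forall]
  exact ⟨fun h i ⟨j, hj⟩ => h j i hj, fun h j i hj => h i ⟨j, hj⟩⟩

theorem ker_mapRange_linearMap (f : ∀ i, M i →ₗ[R] N i) {S : Set ι}
    (hinj : ∀ i ∉ S, Function.Injective (f i)) (hzero : ∀ i ∈ S, f i = 0) :
    LinearMap.ker (mapRange.linearMap f) = supported R M S := by
  ext x
  simp only [LinearMap.mem_ker, mem_supported, DFinsupp.ext_iff, mapRange.linearMap_apply,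
    mapRange_apply, zero_apply]
  refine ⟨fun h i hi => hinj i hi (by rw [h i, map_zero]), fun h i => ?_⟩
  by_cases hi : i ∈ S
  · rw [hzero i hi, LinearMap.zero_apply]
  · rw [h i hi, map_zero]

variable [DecidableEq ι]

theorem single_mem_supported {S : Set ι} {i : ι} (hi : i ∈ S) (b : M i) :
    single i b ∈ supported R M S :=
  fun _ hj => single_eq_of_ne fun h => hj (h ▸ hi)

theorem supported_le_iff {S : Set ι} {p : Submodule R (Π₀ i, M i)} :
    supported R M S ≤ p ↔ ∀ i ∈ S, ∀ b : M i, single i b ∈ p := by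
  refine ⟨fun h i hi b => h (single_mem_supported hi b), fun h x hx => ?_⟩
  induction x using DFinsupp.induction with
  | h0 => exact zero_mem p
  | ha i b f hfi hb ih =>
    have hi : i ∈ S := by
      by_contra hi
      have := hx i hi
      rw [add_apply, single_eq_same, hfi, add_zero] at this
      exact hb this
    refine add_mem (h i hi b) (ih fun j hj => ?_)
    have hji : j ≠ i := fun hji => hj (hji ▸ hi)
    simpa [single_eq_of_ne hji] using hx j hj

theorem supported_sup_supported (S S' : Set ι) :
    supported R M S ⊔ supported R M S' = supported R M (S ∪ S') :=
  le_antisymm (sup_le (supported_mono Set.subset_union_left)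
      (supported_mono Set.subset_union_right))
    (supported_le_iff.2 fun _ hi b => hi.elim
      (fun h => Submodule.mem_sup_left (single_mem_supported h b))
      (fun h => Submodule.mem_sup_right (single_mem_supported h b)))

theorem iSup_supported {κ : Sort*} (S : κ → Set ι) :
    ⨆ j, supported R M (S j) = supported R M (⋃ j, S j) :=
  le_antisymm (iSup_le fun j => supported_mono (Set.subset_iUnion S j))
    (supported_le_iff.2 fun _ hi b => by
      obtain ⟨j, hj⟩ := Set.mem_iUnion.1 hi
      exact Submodule.mem_iSup_of_mem j (single_mem_supported hj b))

theorem range_mapRange_linearMap (f : ∀ i, M i →ₗ[R] N i) {S : Set ι}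
    (hsurj : ∀ i ∈ S, Function.Surjective (f i)) (hzero : ∀ i ∉ S, f i = 0) :
    LinearMap.range (mapRange.linearMap f) = supported R N S := by
  refine le_antisymm ?_ (supported_le_iff.2 fun i hi b => ?_)
  · rintro _ ⟨x, rfl⟩ i hi
    rw [mapRange.linearMap_apply, mapRange_apply, hzero i hi, LinearMap.zero_apply]
  · obtain ⟨a, rfl⟩ := hsurj i hi b
    exact ⟨single i a, by rw [mapRange.linearMap_apply, mapRange_single]⟩

end Supported

section Quotient

variable {R : Type*} {ι : Type*} {M : ι → Type*} [Ring R] [∀ i, AddCommGroup (M i)]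
  [∀ i, Module R (M i)] [DecidableEq ι]

noncomputable def supportedQuotientEquiv (S S' : Set ι) :
    (supported R M S ⧸ (supported R M S').comap (supported R M S).subtype)
      ≃ₗ[R] Π₀ i : ↥(S \ S'), M i := by
  let restrict := (subtypeDomainLinearMap R M (· ∈ S \ S')).comp (supported R M S).subtype
  have hker : LinearMap.ker restrict = (supported R M S').comap (supported R M S).subtype := by
    ext ⟨x, hx⟩
    simp only [LinearMap.mem_ker, Submodule.mem_comap, Submodule.coe_subtype, mem_supported,
      DFinsupp.ext_iff, restrict, LinearMap.comp_apply, subtypeDomainLinearMap_apply,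
      subtypeDomain_apply, zero_apply, Subtype.forall, Set.mem_sdiff]
    refine ⟨fun h i hi => ?_, fun h i hi => h i hi.2⟩
    by_cases hiS : i ∈ S
    · exact h i ⟨hiS, hi⟩
    · exact hx i hiS
  have hsurj : Function.Surjective restrict := by
    intro y
    induction y using DFinsupp.induction with
    | h0 => exact ⟨0, map_zero restrict⟩
    | ha i b f _ _ ih =>
      obtain ⟨x, hx⟩ := ih
      refine ⟨⟨single i.1 b, single_mem_supported i.2.1 b⟩ + x, ?_⟩
      rw [map_add, hx]
      congr 1
      ext j
      by_cases hj : j = i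
      · subst hj
        simp [restrict]
      · simp [restrict, single_eq_of_ne hj, single_eq_of_ne (Subtype.coe_injective.ne hj)]
  exact (Submodule.quotEquivOfEq _ _ hker.symm).trans (restrict.quotKerEquivOfSurjective hsurj)

end Quotient

end DFinsupp

universe u

theorem LinearEquiv.rank_quotient_comap_subtype_map {R : Type*} {M N : Type u} [Ring R]
    [AddCommGroup M] [Module R M] [AddCommGroup N] [Module R N] (e : M ≃ₗ[R] N)
    (p q : Submodule R M) :
    Module.rank R (p.map (e : M →ₗ[R] N) ⧸
        (q.map (e : M →ₗ[R] N)).comap (p.map (e : M →ₗ[R] N)).subtype)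
      = Module.rank R (p ⧸ q.comap p.subtype) := by
  refine (Submodule.Quotient.equiv _ _ (e.submoduleMap p) ?_).rank_eq.symm
  ext ⟨y, hy⟩
  obtain ⟨x, hx, rfl⟩ := Submodule.mem_map.1 hy
  simp

namespace PersMod

open DFinsupp

variable {k : Type} [Field k]

section Preorder

variable {T : Type} [Preorder T]

section IntervalModule

variable {J : Set T} (hJ : IsIntervalSet J) {s t : T} (h : s ≤ t)

theorem intervalModule_map_apply (f : (intervalModule k T J hJ).space s) (ht : PLift (t ∈ J)) :
    (intervalModule k T J hJ).map s t h f ht = if hs : s ∈ J then f ⟨hs⟩ else 0 :=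
  rfl

theorem intervalModule_map_surjective (hs : s ∈ J) :
    Function.Surjective ((intervalModule k T J hJ).map s t h) := fun (g : PLift (t ∈ J) → k) =>
  ⟨fun _ => if ht : t ∈ J then g ⟨ht⟩ else 0,
    funext fun ht => (dif_pos hs).trans (dif_pos ht.down)⟩

theorem intervalModule_map_injective (ht : t ∈ J) :
    Function.Injective ((intervalModule k T J hJ).map s t h) := by
  intro f g hfg
  funext hs
  simpa [intervalModule_map_apply, hs.down] using congrFun hfg ⟨ht⟩

theorem intervalModule_map_eq_zero_of_notMem_left (hs : s ∉ J) :
    (intervalModule k T J hJ).map s t h = 0 :=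
  LinearMap.ext fun _ => funext fun _ => dif_neg hs

theorem intervalModule_map_eq_zero_of_notMem_right (ht : t ∉ J) :
    (intervalModule k T J hJ).map s t h = 0 :=
  LinearMap.ext fun _ => funext fun ht' => absurd ht'.down ht

theorem rank_intervalModule_space (ht : t ∈ J) :
    Module.rank k ((intervalModule k T J hJ).space t) = 1 :=
  have : Unique (PLift (t ∈ J)) := ⟨⟨⟨ht⟩⟩, fun _ => rfl⟩
  (LinearEquiv.funUnique (PLift (t ∈ J)) k k).rank_eq.trans (Module.rank_self k)

end IntervalModule

def imKerInf (V : PersMod k T) (J₀ : Set T) (t₀ : T) : Submodule k (V.space t₀) :=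
  (⨅ s : {s // s ∈ J₀ ∧ s ≤ t₀}, LinearMap.range (V.map s t₀ s.2.2)) ⊓
    ⨅ u : {u // u ∉ J₀ ∧ t₀ ≤ u}, LinearMap.ker (V.map t₀ u u.2.2)

def imKerSup (V : PersMod k T) (J₀ : Set T) (t₀ : T) : Submodule k (V.space t₀) :=
  (⨆ s : {s // s ∉ J₀ ∧ s ≤ t₀}, LinearMap.range (V.map s t₀ s.2.2)) ⊔
    ⨆ u : {u // u ∈ J₀ ∧ t₀ ≤ u}, LinearMap.ker (V.map t₀ u u.2.2)

noncomputable def intervalMult (V : PersMod k T) (J₀ : Set T) (t₀ : T) : Cardinal :=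
  Module.rank k (imKerInf V J₀ t₀ ⧸ (imKerSup V J₀ t₀).comap (imKerInf V J₀ t₀).subtype)

section Iso

variable {U V : PersMod k T} (e : ∀ t, U.space t ≃ₗ[k] V.space t)
  (he : ∀ s t (h : s ≤ t),
    (e t).toLinearMap.comp (U.map s t h) = (V.map s t h).comp (e s).toLinearMap)

include he

theorem map_range_of_iso {s t : T} (h : s ≤ t) :
    (LinearMap.range (U.map s t h)).map (e t : U.space t →ₗ[k] V.space t)
      = LinearMap.range (V.map s t h) := by
  rw [← LinearMap.range_comp, he, LinearMap.range_comp, LinearEquiv.range, Submodule.map_top]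

theorem map_ker_of_iso {s t : T} (h : s ≤ t) :
    (LinearMap.ker (U.map s t h)).map (e s : U.space s →ₗ[k] V.space s)
      = LinearMap.ker (V.map s t h) := by
  rw [← LinearEquiv.ker_comp (e t), he, LinearMap.ker_comp,
    Submodule.map_comap_eq_of_surjective (e s).surjective]

theorem map_imKerInf_of_iso (J₀ : Set T) (t₀ : T) :
    (imKerInf U J₀ t₀).map (e t₀ : U.space t₀ →ₗ[k] V.space t₀) = imKerInf V J₀ t₀ := by
  rw [← Submodule.orderIsoMapComap_apply, imKerInf, OrderIso.map_inf, OrderIso.map_iInf,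
    OrderIso.map_iInf]
  simp only [Submodule.orderIsoMapComap_apply, map_range_of_iso e he,
    map_ker_of_iso e he, imKerInf]

theorem map_imKerSup_of_iso (J₀ : Set T) (t₀ : T) :
    (imKerSup U J₀ t₀).map (e t₀ : U.space t₀ →ₗ[k] V.space t₀) = imKerSup V J₀ t₀ := by
  simp only [imKerSup, Submodule.map_sup, Submodule.map_iSup, map_range_of_iso e he,
    map_ker_of_iso e he]

end Iso

theorem intervalMult_eq_of_persIso {U V : PersMod k T} (h : PersIso U V) (J₀ : Set T) (t₀ : T) :
    intervalMult U J₀ t₀ = intervalMult V J₀ t₀ := by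
  obtain ⟨e, he⟩ := h
  rw [intervalMult, intervalMult, ← map_imKerInf_of_iso e he, ← map_imKerSup_of_iso e he,
    LinearEquiv.rank_quotient_comap_subtype_map]

section IntervalDecomposition

variable {L : Type} {J : L → Set T} (hJ : ∀ ℓ, IsIntervalSet (J ℓ))

theorem range_dsum_intervalModule_map {s t : T} (h : s ≤ t) :
    LinearMap.range ((dsum fun ℓ => intervalModule k T (J ℓ) (hJ ℓ)).map s t h)
      = supported k (fun ℓ => (intervalModule k T (J ℓ) (hJ ℓ)).space t) {ℓ | s ∈ J ℓ} :=
  range_mapRange_linearMap _ (fun ℓ hs => intervalModule_map_surjective (hJ ℓ) h hs)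
    (fun ℓ hs => intervalModule_map_eq_zero_of_notMem_left (hJ ℓ) h hs)

theorem ker_dsum_intervalModule_map {s t : T} (h : s ≤ t) :
    LinearMap.ker ((dsum fun ℓ => intervalModule k T (J ℓ) (hJ ℓ)).map s t h)
      = supported k (fun ℓ => (intervalModule k T (J ℓ) (hJ ℓ)).space s) {ℓ | t ∉ J ℓ} :=
  ker_mapRange_linearMap _ (fun ℓ ht => intervalModule_map_injective (hJ ℓ) h (not_not.1 ht))
    (fun ℓ ht => intervalModule_map_eq_zero_of_notMem_right (hJ ℓ) h ht)

theorem imKerInf_dsum_intervalModule (J₀ : Set T) (t₀ : T) :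
    imKerInf (dsum fun ℓ => intervalModule k T (J ℓ) (hJ ℓ)) J₀ t₀
      = supported k (fun ℓ => (intervalModule k T (J ℓ) (hJ ℓ)).space t₀)
          {ℓ | (∀ s ∈ J₀, s ≤ t₀ → s ∈ J ℓ) ∧ ∀ u ∉ J₀, t₀ ≤ u → u ∉ J ℓ} := by
  simp only [imKerInf, range_dsum_intervalModule_map, ker_dsum_intervalModule_map]
  -- `(dsum _).space t₀` is `Π₀ ℓ, _` only up to unfolding `dsum`
  erw [iInf_supported, iInf_supported, supported_inf_supported]
  congr 1
  ext ℓ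
  simp

theorem imKerSup_dsum_intervalModule (J₀ : Set T) (t₀ : T) :
    imKerSup (dsum fun ℓ => intervalModule k T (J ℓ) (hJ ℓ)) J₀ t₀
      = supported k (fun ℓ => (intervalModule k T (J ℓ) (hJ ℓ)).space t₀)
          {ℓ | (∃ s ∉ J₀, s ≤ t₀ ∧ s ∈ J ℓ) ∨ ∃ u ∈ J₀, t₀ ≤ u ∧ u ∉ J ℓ} := by
  simp only [imKerSup, range_dsum_intervalModule_map, ker_dsum_intervalModule_map]
  erw [iSup_supported, iSup_supported, supported_sup_supported]
  congr 1
  ext ℓ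
  simp [and_assoc]

end IntervalDecomposition

end Preorder

section LinearOrder

variable {T : Type} [LinearOrder T] {L M : Type} {J : L → Set T} {K : M → Set T}
  (hJ : ∀ ℓ, IsIntervalSet (J ℓ)) (hK : ∀ m, IsIntervalSet (K m))

theorem intervalMult_dsum_intervalModule {J₀ : Set T} {t₀ : T} (ht₀ : t₀ ∈ J₀) :
    intervalMult (dsum fun ℓ => intervalModule k T (J ℓ) (hJ ℓ)) J₀ t₀
      = Cardinal.mk {ℓ // J ℓ = J₀} := by
  have hfiber : {ℓ | (∀ s ∈ J₀, s ≤ t₀ → s ∈ J ℓ) ∧ ∀ u ∉ J₀, t₀ ≤ u → u ∉ J ℓ} \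
      {ℓ | (∃ s ∉ J₀, s ≤ t₀ ∧ s ∈ J ℓ) ∨ ∃ u ∈ J₀, t₀ ≤ u ∧ u ∉ J ℓ} = {ℓ | J ℓ = J₀} := by
    ext ℓ
    simp only [Set.mem_sdiff, Set.mem_ofPred_eq, not_or, not_exists, not_and]
    constructor
    · rintro ⟨⟨h₁, h₂⟩, h₃, h₄⟩
      ext x
      rcases le_total x t₀ with hx | hx
      · exact ⟨fun hxJ => by_contra fun hx₀ => h₃ x hx₀ hx hxJ, fun hx₀ => h₁ x hx₀ hx⟩
      · exact ⟨fun hxJ => by_contra fun hx₀ => h₂ x hx₀ hx hxJ,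
          fun hx₀ => by_contra (h₄ x hx₀ hx)⟩
    · rintro rfl
      exact ⟨⟨fun _ hs _ => hs, fun _ hu _ => hu⟩, fun _ hs _ => hs, fun _ hu _ => not_not.2 hu⟩
  rw [intervalMult, imKerInf_dsum_intervalModule, imKerSup_dsum_intervalModule]
  refine (supportedQuotientEquiv _ _).rank_eq.trans ?_
  rw [hfiber]
  refine (rank_directSum (R := k) _).trans ?_
  have hrank (ℓ : {ℓ // J ℓ = J₀}) :
      Module.rank k ((intervalModule k T (J ℓ) (hJ ℓ)).space t₀) = 1 :=
    rank_intervalModule_space (hJ ℓ) (ℓ.2.symm ▸ ht₀)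
  simp only [Set.mem_ofPred_eq, hrank, Cardinal.sum_const, Cardinal.lift_id, mul_one]
  rfl

theorem card_fiber_eq_of_persIso {V : PersMod k T}
    (hVJ : PersIso V (dsum fun ℓ => intervalModule k T (J ℓ) (hJ ℓ)))
    (hVK : PersIso V (dsum fun m => intervalModule k T (K m) (hK m))) (J₀ : Set T) :
    Cardinal.mk {ℓ // J ℓ = J₀} = Cardinal.mk {m // K m = J₀} := by
  rcases J₀.eq_empty_or_nonempty with rfl | ⟨t₀, ht₀⟩
  · simp [(hJ _).1.ne_empty, (hK _).1.ne_empty]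
  · calc Cardinal.mk {ℓ // J ℓ = J₀}
        = intervalMult V J₀ t₀ := by
          rw [intervalMult_eq_of_persIso hVJ, intervalMult_dsum_intervalModule hJ ht₀]
      _ = Cardinal.mk {m // K m = J₀} := by
          rw [intervalMult_eq_of_persIso hVK, intervalMult_dsum_intervalModule hK ht₀]

end LinearOrder

end PersMod

theorem stmt0 {k : Type} [Field k] (T : Set ℝ) (V : PersMod k ↥T)
    {L M : Type} (J : L → Set ↥T) (K : M → Set ↥T)
    (hJ : ∀ ℓ, IsIntervalSet (J ℓ)) (hK : ∀ m, IsIntervalSet (K m))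
    (hVJ : PersIso V (dsum fun ℓ => intervalModule k ↥T (J ℓ) (hJ ℓ)))
    (hVK : PersIso V (dsum fun m => intervalModule k ↥T (K m) (hK m))) :
    ∃ σ : L ≃ M, ∀ ℓ, J ℓ = K (σ ℓ) := by
  have hfiber (J₀ : Set ↥T) : Nonempty ({ℓ // J ℓ = J₀} ≃ {m // K m = J₀}) :=
    Cardinal.eq.1 (PersMod.card_fiber_eq_of_persIso hJ hK hVJ hVK J₀)
  let e (J₀ : Set ↥T) := (hfiber J₀).some
  exact ⟨Equiv.ofFiberEquiv e, fun ℓ => (Equiv.ofFiberEquiv_map e ℓ).symm⟩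
end

section
/- Webb's example: let W be the persistence module over the poset T = {0, −1, −2, …} of nonpositive integers defined by W_0 = k^ℕ (the space of all sequences (x_1, x_2, x_3, …) with entries in k), W_{−n} = {x ∈ k^ℕ : x_1 = ⋯ = x_n = 0} for n ≥ 1, with structure maps the inclusions W_{−m} ⊆ W_{−n} for m ≥ n. Then W is not isomorphic to any direct sum of interval modules. -/
attribute [local instance] Classical.propDecidable

open scoped ENNReal

/-! In a direct sum of interval modules, the image of `V_s → V_t` has codimension at least
the number of bars containing `t` but not `s`, while a bar containing `t` and all of
`s₀, s₁, …` contributes a nonzero vector to every image of `V_{sₙ} → V_t`. For Webb's module,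
with `t = 0` and `sₙ = -n`, these images are the `W_{-n}`: they have finite codimension and
meet in `0`. So the bars through `0` form a countable union of finite sets, and `W_0 = k^ℕ`
would have countable dimension. -/

open Cardinal

section Barcode

variable {k : Type} [Field k] {T : Type} [Preorder T] {L : Type}
  (J : L → Set T) (hJ : ∀ ℓ, IsIntervalSet (J ℓ))

noncomputable abbrev barcodeModule : PersMod k T :=
  dsum fun ℓ => intervalModule k T (J ℓ) (hJ ℓ)

noncomputable def barcodeGen (t : T) (ℓ : L) : (barcodeModule (k := k) J hJ).space t :=
  DFinsupp.single (β := fun ℓ => PLift (t ∈ J ℓ) → k) ℓ (fun _ => 1)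

noncomputable def barcodeCoord {t : T} {ℓ : L} (ht : t ∈ J ℓ) :
    (barcodeModule (k := k) J hJ).space t →ₗ[k] k :=
  (LinearMap.proj (R := k) (φ := fun _ : PLift (t ∈ J ℓ) => k) ⟨ht⟩).comp
    (DFinsupp.lapply (M := fun ℓ => PLift (t ∈ J ℓ) → k) ℓ)

variable {J hJ}

lemma barcodeCoord_barcodeGen {t : T} {ℓ ℓ' : L} (ht : t ∈ J ℓ) :
    barcodeCoord (k := k) J hJ ht (barcodeGen J hJ t ℓ') = if ℓ' = ℓ then 1 else 0 := by
  change (DFinsupp.single ℓ' (fun _ => (1 : k)) : Π₀ ℓ, (PLift (t ∈ J ℓ) → k)) ℓ ⟨ht⟩ = _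
  rw [DFinsupp.single_apply]
  split_ifs with hℓ
  · subst hℓ; rfl
  · rfl

lemma barcodeGen_ne_zero {t : T} {ℓ : L} (ht : t ∈ J ℓ) : barcodeGen (k := k) J hJ t ℓ ≠ 0 := by
  intro h
  simpa [h] using barcodeCoord_barcodeGen (k := k) (hJ := hJ) (ℓ' := ℓ) ht

lemma barcodeModule_map_barcodeGen {s t : T} (h : s ≤ t) {ℓ : L} (hs : s ∈ J ℓ) :
    (barcodeModule J hJ).map s t h (barcodeGen (k := k) J hJ s ℓ) = barcodeGen J hJ t ℓ := by
  refine (DFinsupp.mapRange_single (hf := fun _ => map_zero _)).trans ?_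
  congr 1
  funext ht
  exact dif_pos hs

lemma barcodeCoord_map_of_not_mem {s t : T} (h : s ≤ t) {ℓ : L} (ht : t ∈ J ℓ) (hs : s ∉ J ℓ)
    (x : (barcodeModule (k := k) J hJ).space s) :
    barcodeCoord J hJ ht ((barcodeModule J hJ).map s t h x) = 0 :=
  dif_neg hs

lemma linearIndependent_mkQ_barcodeGen {s t : T} (h : s ≤ t) :
    LinearIndependent k fun ℓ : {ℓ // t ∈ J ℓ ∧ s ∉ J ℓ} =>
      (LinearMap.range ((barcodeModule J hJ).map s t h)).mkQ (barcodeGen (k := k) J hJ t ℓ) := by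
  have hker (ℓ : {ℓ // t ∈ J ℓ ∧ s ∉ J ℓ}) :
      LinearMap.range ((barcodeModule J hJ).map s t h) ≤
        LinearMap.ker (barcodeCoord (k := k) J hJ ℓ.2.1) := by
    rintro _ ⟨x, rfl⟩
    exact barcodeCoord_map_of_not_mem h ℓ.2.1 ℓ.2.2 x
  refine .of_pairwise_dual_eq_zero_one _ (fun ℓ => Submodule.liftQ _ _ (hker ℓ)) ?_ ?_
  · intro ℓ ℓ' hne
    simp [barcodeCoord_barcodeGen, Subtype.coe_ne_coe.mpr hne.symm]
  · intro ℓ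
    simp [barcodeCoord_barcodeGen]

lemma rank_barcodeModule_space (t : T) :
    Module.rank k ((barcodeModule (k := k) J hJ).space t) = #{ℓ // t ∈ J ℓ} := by
  change Module.rank k (DirectSum L fun ℓ => PLift (t ∈ J ℓ) → k) = _
  rw [rank_directSum]
  simp only [rank_fun', ← mk_fintype, ← mk_sigma]
  exact mk_congr (Equiv.sigmaPLiftEquivSubtype _)

lemma map_range_eq_range_of_comm {U V : PersMod k T} (e : ∀ t, U.space t ≃ₗ[k] V.space t)
    (he : ∀ s t (h : s ≤ t),
      (e t).toLinearMap.comp (U.map s t h) = (V.map s t h).comp (e s).toLinearMap)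
    {s t : T} (h : s ≤ t) :
    (LinearMap.range (U.map s t h)).map (e t).toLinearMap = LinearMap.range (V.map s t h) := by
  rw [← LinearMap.range_comp, he, LinearMap.range_comp_of_range_eq_top _ (LinearEquiv.range _)]

theorem not_persIso_barcodeModule (V : PersMod k T) (t : T) (s : ℕ → T) (hst : ∀ n, s n ≤ t)
    (hfin : ∀ n, Module.Finite k (V.space t ⧸ LinearMap.range (V.map (s n) t (hst n))))
    (hsep : ∀ x, (∀ n, x ∈ LinearMap.range (V.map (s n) t (hst n))) → x = 0)
    (hrank : ℵ₀ < Module.rank k (V.space t)) :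
    ¬ PersIso V (barcodeModule J hJ) := by
  rintro ⟨e, he⟩
  have hrange (n : ℕ) := map_range_eq_range_of_comm e he (hst n)
  have hborn (n : ℕ) : {ℓ | t ∈ J ℓ ∧ s n ∉ J ℓ}.Finite := by
    have := Module.Finite.equiv (Submodule.Quotient.equiv _ _ (e t) (hrange n))
    exact Set.finite_coe_iff.mp
      (linearIndependent_mkQ_barcodeGen (k := k) (hJ := hJ) (hst n)).finite
  have hcover : {ℓ | t ∈ J ℓ} ⊆ ⋃ n, {ℓ | t ∈ J ℓ ∧ s n ∉ J ℓ} := by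
    intro ℓ ht
    by_contra hnot
    simp only [Set.mem_iUnion, Set.mem_ofPred_eq, not_exists, not_and, not_not] at hnot
    refine barcodeGen_ne_zero (k := k) (hJ := hJ) ht ((LinearEquiv.map_eq_zero_iff (e t).symm).mp
      (hsep _ fun n => ?_))
    rw [← Submodule.mem_map_equiv, hrange n]
    exact ⟨_, barcodeModule_map_barcodeGen (hst n) (hnot n ht)⟩
  have hcount : {ℓ | t ∈ J ℓ}.Countable :=
    (Set.countable_iUnion fun n => (hborn n).countable).mono hcover
  rw [(e t).rank_eq, rank_barcodeModule_space] at hrank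
  exact hrank.not_ge (mk_le_aleph0_iff.mpr hcount.to_subtype)

end Barcode

section Webb

variable (k : Type) [Field k]

lemma aleph0_lt_rank_fun (ι : Type) [Infinite ι] : ℵ₀ < Module.rank k (ι → k) := by
  rw [rank_fun_infinite, mk_arrow, lift_id, lift_id]
  exact (aleph0_le_mk ι).trans_lt (cantor' _ (one_lt_iff_nontrivial.mpr inferInstance))

def negNat (n : ℕ) : ↥{n : ℤ | n ≤ 0} := ⟨-n, by simp⟩

lemma negNat_le_negNat_zero (n : ℕ) : negNat n ≤ negNat 0 := by
  change -(n : ℤ) ≤ -((0 : ℕ) : ℤ)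
  omega

lemma mem_range_webbModule_map {s t : ↥{n : ℤ | n ≤ 0}} (h : s ≤ t) (x : (webbModule k).space t) :
    x ∈ LinearMap.range ((webbModule k).map s t h) ↔ ∀ i : ℕ, (i : ℤ) < -s.1 → x.1 i = 0 :=
  ⟨fun ⟨y, hy⟩ => hy ▸ y.2, fun hx => ⟨⟨x.1, hx⟩, rfl⟩⟩

lemma finite_quotient_range_webbModule_map {s t : ↥{n : ℤ | n ≤ 0}} (h : s ≤ t) :
    Module.Finite k ((webbModule k).space t ⧸ LinearMap.range ((webbModule k).map s t h)) := by
  let firstCoords : (webbModule k).space t →ₗ[k] (Fin (-s.1).toNat → k) :=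
    (LinearMap.funLeft k k fun i : Fin (-s.1).toNat => (i : ℕ)).comp (Submodule.subtype _)
  have hker : LinearMap.range ((webbModule k).map s t h) = LinearMap.ker firstCoords := by
    ext x
    rw [mem_range_webbModule_map, LinearMap.mem_ker, funext_iff]
    exact ⟨fun hx i => hx i (Int.lt_toNat.mp i.2), fun hx i hi => hx ⟨i, Int.lt_toNat.mpr hi⟩⟩
  rw [hker]
  exact Module.Finite.equiv firstCoords.quotKerEquivRange.symm

lemma eq_zero_of_forall_mem_range_webbModule_map (x : (webbModule k).space (negNat 0))
    (hx : ∀ n, x ∈ LinearMap.range ((webbModule k).map (negNat n) (negNat 0)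
      (negNat_le_negNat_zero n))) :
    x = 0 := by
  refine Subtype.ext (funext fun i => ?_)
  refine (mem_range_webbModule_map k _ x).mp (hx (i + 1)) i ?_
  change (i : ℤ) < -(-((i + 1 : ℕ) : ℤ))
  omega

lemma aleph0_lt_rank_webbModule_space_zero :
    ℵ₀ < Module.rank k ((webbModule k).space (negNat 0)) := by
  have htop : webbSubmodule k (negNat 0).1 = ⊤ := by
    refine eq_top_iff.mpr fun x _ i hi => absurd hi ?_
    change ¬ (i : ℤ) < -(-((0 : ℕ) : ℤ))
    omega
  change ℵ₀ < Module.rank k (webbSubmodule k (negNat 0).1)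
  rw [(LinearEquiv.ofTop _ htop).rank_eq]
  exact aleph0_lt_rank_fun k ℕ

end Webb

theorem stmt3 (k : Type) [Field k] :
    ¬ ∃ (L : Type) (J : L → Set ↥{n : ℤ | n ≤ 0}) (hJ : ∀ ℓ, IsIntervalSet (J ℓ)),
      PersIso (webbModule k) (dsum fun ℓ => intervalModule k ↥{n : ℤ | n ≤ 0} (J ℓ) (hJ ℓ)) := by
  rintro ⟨L, J, hJ, hiso⟩
  exact not_persIso_barcodeModule (webbModule k) (negNat 0) negNat negNat_le_negNat_zero
    (fun n => finite_quotient_range_webbModule_map k _)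
    (eq_zero_of_forall_mem_range_webbModule_map k)
    (aleph0_lt_rank_webbModule_space_zero k) hiso
end

section
/- Localisation formulas for the persistence measure: let V be a persistence module over ℝ and let a < b ≤ c < d be real numbers. Then the k-dimensions (as elements of {0,1,2,…} ∪ {∞}) of the two quotient spaces (im(v_b^c) ∩ ker(v_c^d)) / (im(v_a^c) ∩ ker(v_c^d)) and ker(v_b^d) / (ker(v_b^c) + im(v_a^b) ∩ ker(v_b^d)) are equal. -/
attribute [local instance] Classical.propDecidable

open scoped ENNReal

/-!
The map `v_b^c` carries `ker v_b^d` onto `im v_b^c ∩ ker v_c^d`, and the preimage of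
`im v_a^c ∩ ker v_c^d` under it is `ker v_b^c + im v_a^b`, which meets `ker v_b^d` in
`ker v_b^c + im v_a^b ∩ ker v_b^d` by the modular law. The two quotients are therefore
isomorphic.
-/

namespace Submodule

variable {R M N : Type*} [Ring R] [AddCommGroup M] [Module R M] [AddCommGroup N] [Module R N]

noncomputable def quotientEquivOfMapEq (f : M →ₗ[R] N) {p p' : Submodule R M}
    {q q' : Submodule R N} (hq : p.map f = q) (hp' : q'.comap f = p') :
    (p ⧸ comap p.subtype p') ≃ₗ[R] (q ⧸ comap q.subtype q') := by
  subst hq hp'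
  let F : p →ₗ[R] p.map f ⧸ comap (p.map f).subtype q' :=
    (comap (p.map f).subtype q').mkQ ∘ₗ f.restrict fun x hx => mem_map_of_mem hx
  have hF : Function.Surjective F := by
    refine (mkQ_surjective _).comp ?_
    rintro ⟨_, x, hx, rfl⟩
    exact ⟨⟨x, hx⟩, rfl⟩
  have hker : LinearMap.ker F = comap p.subtype (q'.comap f) := by
    ext x
    simp [F, LinearMap.restrict_apply]
  exact (quotEquivOfEq _ _ hker.symm).trans (F.quotKerEquivOfSurjective hF)

end Submodule

namespace LinearMap

open Submodule

variable {R L M N P : Type*} [Ring R] [AddCommGroup L] [Module R L] [AddCommGroup M]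
  [Module R M] [AddCommGroup N] [Module R N] [AddCommGroup P] [Module R P]

theorem map_ker_comp (f : M →ₗ[R] N) (g : N →ₗ[R] P) :
    (ker (g ∘ₗ f)).map f = range f ⊓ ker g := by
  rw [ker_comp, map_comap_eq]

theorem comap_range_comp_inf_ker (h : L →ₗ[R] M) (f : M →ₗ[R] N) (g : N →ₗ[R] P) :
    (range (f ∘ₗ h) ⊓ ker g).comap f = ker f ⊔ range h ⊓ ker (g ∘ₗ f) := by
  rw [comap_inf, ← ker_comp, range_comp, comap_map_eq, sup_comm,
    sup_inf_assoc_of_le _ (ker_le_ker_comp f g)]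

noncomputable def kerCompQuotientEquiv (h : L →ₗ[R] M) (f : M →ₗ[R] N) (g : N →ₗ[R] P) :
    (ker (g ∘ₗ f) ⧸ comap (ker (g ∘ₗ f)).subtype (ker f ⊔ range h ⊓ ker (g ∘ₗ f))) ≃ₗ[R]
      (↥(range f ⊓ ker g) ⧸ comap (range f ⊓ ker g).subtype (range (f ∘ₗ h) ⊓ ker g)) :=
  quotientEquivOfMapEq f (map_ker_comp f g) (comap_range_comp_inf_ker h f g)

end LinearMap

theorem LinearEquiv.edim_eq {k M N : Type} [Field k] [AddCommGroup M] [Module k M]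
    [AddCommGroup N] [Module k N] (e : M ≃ₗ[k] N) : edim k M = edim k N :=
  congrArg Cardinal.toENat e.rank_eq

theorem stmt4 {k : Type} [Field k] (V : PersMod k ℝ) (a b c d : ℝ)
    (hab : a < b) (hbc : b ≤ c) (hcd : c < d) :
    edim k
      (↥(LinearMap.range (V.map b c hbc) ⊓ LinearMap.ker (V.map c d hcd.le)) ⧸
        Submodule.comap
          (LinearMap.range (V.map b c hbc) ⊓ LinearMap.ker (V.map c d hcd.le)).subtype
          (LinearMap.range (V.map a c (hab.le.trans hbc)) ⊓ LinearMap.ker (V.map c d hcd.le))) =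
    edim k
      (↥(LinearMap.ker (V.map b d (hbc.trans hcd.le))) ⧸
        Submodule.comap (LinearMap.ker (V.map b d (hbc.trans hcd.le))).subtype
          (LinearMap.ker (V.map b c hbc) ⊔
            LinearMap.range (V.map a b hab.le) ⊓ LinearMap.ker (V.map b d (hbc.trans hcd.le)))) := by
  have e := LinearMap.kerCompQuotientEquiv (V.map a b hab.le) (V.map b c hbc) (V.map c d hcd.le)
  rw [V.map_comp, V.map_comp] at e
  exact e.symm.edim_eq
end

section
/- Alternating sum formula: let V be a persistence module over ℝ, let a < b ≤ c < d be real numbers, and write r_s^t = rank(v_s^t). If r_b^c < ∞, then r_a^c, r_b^d, r_a^d are also finite and μ_V([a,b]×[c,d]) = r_b^c − r_a^c − r_b^d + r_a^d. -/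
attribute [local instance] Classical.propDecidable

open scoped ENNReal

/-! With `K = ker v_c^d` and `I_s = im v_s^c`, rank–nullity for `v_c^d` restricted to `I_s`
gives `r_s^c = r_s^d + dim (I_s ∩ K)` for `s = a, b`, while `μ_V([a,b]×[c,d])` is the dimension
of `(I_b ∩ K) / (I_a ∩ K)`, so `μ + dim (I_a ∩ K) = dim (I_b ∩ K)`. Eliminating the two
intersection dimensions yields the alternating sum; finiteness follows from `I_a ⊆ I_b` and
`r_s^d ≤ r_s^c`. -/

section Edim

variable {k : Type} [Field k] {M N : Type} [AddCommGroup M] [Module k M] [AddCommGroup N]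
  [Module k N]

theorem edim_congr {P Q : Type} [AddCommGroup P] [Module k P] [AddCommGroup Q] [Module k Q]
    (e : P ≃ₗ[k] Q) : edim k P = edim k Q := by
  rw [edim, edim, e.rank_eq]

theorem edim_mono {p q : Submodule k M} (h : p ≤ q) : edim k p ≤ edim k q :=
  Cardinal.toENat.monotone' (Submodule.rank_mono h)

theorem edim_quotient_add_edim_of_le {p q : Submodule k M} (h : p ≤ q) :
    edim k (q ⧸ Submodule.comap q.subtype p) + edim k p = edim k q := by
  rw [← edim_congr (Submodule.comapSubtypeEquivOfLe h), edim, edim, edim, ← map_add,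
    Submodule.rank_quotient_add_rank]

theorem edim_map_add_edim_inf_ker (f : M →ₗ[k] N) (p : Submodule k M) :
    edim k (p.map f) + edim k ↥(p ⊓ LinearMap.ker f) = edim k p := by
  have hrange : LinearMap.range (f ∘ₗ p.subtype) = p.map f := by
    rw [LinearMap.range_comp, Submodule.range_subtype]
  have hker : LinearMap.ker (f ∘ₗ p.subtype) = (p ⊓ LinearMap.ker f).comap p.subtype := by
    rw [LinearMap.ker_comp, Submodule.comap_inf, Submodule.comap_subtype_self, top_inf_eq]
  have hle : p ⊓ LinearMap.ker f ≤ p := inf_le_left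
  rw [← hrange, ← edim_congr (Submodule.comapSubtypeEquivOfLe hle), ← hker, edim, edim, edim,
    ← map_add, LinearMap.rank_range_add_rank_ker]

end Edim

namespace PersMod

variable {k : Type} [Field k]

section Preorder

variable {T : Type} [Preorder T] (V : PersMod k T)

theorem range_map_congr {x y c : T} (hxy : x = y) (hx : x ≤ c) (hy : y ≤ c) :
    LinearMap.range (V.map x c hx) = LinearMap.range (V.map y c hy) := by
  subst hxy; rfl

theorem ker_map_congr {c x y : T} (hxy : x = y) (hx : c ≤ x) (hy : c ≤ y) :
    LinearMap.ker (V.map c x hx) = LinearMap.ker (V.map c y hy) := by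
  subst hxy; rfl

theorem range_map_le_range_map {a b c : T} (hab : a ≤ b) (hbc : b ≤ c) :
    LinearMap.range (V.map a c (hab.trans hbc)) ≤ LinearMap.range (V.map b c hbc) := by
  rw [← V.map_comp a b c hab hbc]
  exact LinearMap.range_comp_le_range _ _

theorem map_range_map {s c d : T} (hsc : s ≤ c) (hcd : c ≤ d) :
    (LinearMap.range (V.map s c hsc)).map (V.map c d hcd)
      = LinearMap.range (V.map s d (hsc.trans hcd)) := by
  rw [← LinearMap.range_comp, V.map_comp]

theorem erank_map_add_edim_inf_ker {s c d : T} (hsc : s ≤ c) (hcd : c ≤ d) :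
    erank (V.map s d (hsc.trans hcd))
        + edim k ↥(LinearMap.range (V.map s c hsc) ⊓ LinearMap.ker (V.map c d hcd))
      = erank (V.map s c hsc) := by
  rw [erank, erank, ← V.map_range_map hsc hcd, edim_map_add_edim_inf_ker]

end Preorder

variable (V : PersMod k ℝ)

theorem persIm_coe {b c : ℝ} (h : b ≤ c) :
    persIm V (b : EReal) c = LinearMap.range (V.map b c h) := by
  have hex : ∃ b' : ℝ, (b : EReal) = (b' : EReal) ∧ b' ≤ c := ⟨b, rfl, h⟩
  rw [persIm, dif_pos hex]
  exact range_map_congr V (EReal.coe_injective hex.choose_spec.1).symm _ _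

theorem persKer_coe {c d : ℝ} (h : c ≤ d) :
    persKer V c (d : EReal) = LinearMap.ker (V.map c d h) := by
  have hex : ∃ d' : ℝ, (d : EReal) = (d' : EReal) ∧ c ≤ d' := ⟨d, rfl, h⟩
  rw [persKer, dif_pos hex]
  exact ker_map_congr V (EReal.coe_injective hex.choose_spec.1).symm _ _

theorem persMeasure_add_edim_inf_ker {a b c d : ℝ} (hab : a ≤ b) (hbc : b ≤ c)
    (hcd : c ≤ d) :
    persMeasure V a b c d
        + edim k ↥(LinearMap.range (V.map a c (hab.trans hbc)) ⊓ LinearMap.ker (V.map c d hcd))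
      = edim k ↥(LinearMap.range (V.map b c hbc) ⊓ LinearMap.ker (V.map c d hcd)) := by
  rw [persMeasure, persIm_coe V hbc, persIm_coe V (hab.trans hbc), persKer_coe V hcd]
  exact edim_quotient_add_edim_of_le (inf_le_inf_right _ (V.range_map_le_range_map hab hbc))

end PersMod

theorem stmt5 {k : Type} [Field k] (V : PersMod k ℝ) (a b c d : ℝ)
    (hab : a < b) (hbc : b ≤ c) (hcd : c < d)
    (hfin : erank (V.map b c hbc) ≠ ⊤) :
    erank (V.map a c (hab.le.trans hbc)) ≠ ⊤ ∧
    erank (V.map b d (hbc.trans hcd.le)) ≠ ⊤ ∧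
    erank (V.map a d ((hab.le.trans hbc).trans hcd.le)) ≠ ⊤ ∧
    persMeasure V (a : EReal) b c (d : EReal)
        + erank (V.map a c (hab.le.trans hbc)) + erank (V.map b d (hbc.trans hcd.le))
      = erank (V.map b c hbc) + erank (V.map a d ((hab.le.trans hbc).trans hcd.le)) := by
  have hac := hab.le.trans hbc
  have hrank_bc := V.erank_map_add_edim_inf_ker hbc hcd.le
  have hrank_ac := V.erank_map_add_edim_inf_ker hac hcd.le
  have hmeasure := V.persMeasure_add_edim_inf_ker hab.le hbc hcd.le
  have hac_le_bc : erank (V.map a c hac) ≤ erank (V.map b c hbc) :=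
    edim_mono (V.range_map_le_range_map hab.le hbc)
  have hfin_ac := ne_top_of_le_ne_top hfin hac_le_bc
  refine ⟨hfin_ac, ne_top_of_le_ne_top hfin (hrank_bc ▸ le_self_add),
    ne_top_of_le_ne_top hfin_ac (hrank_ac ▸ le_self_add), ?_⟩
  rw [← hrank_bc, ← hrank_ac, ← hmeasure]
  ring
end

section
/- Persistence measure of an interval module: let J ⊆ ℝ be an interval and V = I^J. For all extended reals −∞ ≤ a < b ≤ c < d ≤ +∞ with b and c finite, μ_V([a,b]×[c,d]) = 1 if [b,c] ⊆ J ⊆ (a,d), and μ_V([a,b]×[c,d]) = 0 otherwise (here (a,d) denotes (−∞,d) when a = −∞ and (a,+∞) when d = +∞). -/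
attribute [local instance] Classical.propDecidable

open scoped ENNReal

/-!
For an interval module `V = I^J`, each `V_c` is `k` or `0`. The image of `v_x^c` is all of `V_c`
when `x ∈ J` and zero otherwise, and the kernel of `v_c^y` is zero when `c, y ∈ J` and all of
`V_c` otherwise. Hence, for `c ∈ J`, the quotient defining `μ_V` is `V_c` exactly when `b ∈ J`,
`a ∉ J` and `d ∉ J`, and is zero otherwise; by convexity of `J` this is the condition
`[b,c] ⊆ J ⊆ (a,d)`.
-/

section IntervalModule

variable {k : Type} [Field k] {T : Type} [Preorder T] {J : Set T} (hJ : IsIntervalSet J)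

lemma intervalModule_map_apply {s t : T} (h : s ≤ t) (f : (intervalModule k T J hJ).space s)
    (ht : PLift (t ∈ J)) :
    (intervalModule k T J hJ).map s t h f ht = if hs : s ∈ J then f ⟨hs⟩ else 0 :=
  rfl

lemma intervalModule_subsingleton_space {t : T} (ht : t ∉ J) :
    Subsingleton ((intervalModule k T J hJ).space t) :=
  ⟨fun _ _ => funext fun h => absurd h.down ht⟩

lemma edim_intervalModule_space {t : T} (ht : t ∈ J) :
    edim k ((intervalModule k T J hJ).space t) = 1 := by
  have : Unique (PLift (t ∈ J)) := ⟨⟨⟨ht⟩⟩, fun _ => rfl⟩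
  show edim k (PLift (t ∈ J) → k) = 1
  rw [edim, (LinearEquiv.funUnique (PLift (t ∈ J)) k k).rank_eq, Module.rank_self,
    map_one]

lemma intervalModule_map_eq_zero {s t : T} (h : s ≤ t) (hs : s ∉ J) :
    (intervalModule k T J hJ).map s t h = 0 :=
  LinearMap.ext fun f => funext fun ht => by rw [intervalModule_map_apply, dif_neg hs]; rfl

lemma intervalModule_map_surjective {s t : T} (h : s ≤ t) (hs : s ∈ J) :
    Function.Surjective ((intervalModule k T J hJ).map s t h) := fun g =>
  ⟨fun _ => if ht : t ∈ J then g ⟨ht⟩ else 0, funext fun ht =>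
    (intervalModule_map_apply hJ h _ ht).trans (by rw [dif_pos hs, dif_pos ht.down])⟩

lemma intervalModule_map_injective {s t : T} (h : s ≤ t) (hs : s ∈ J) (ht : t ∈ J) :
    Function.Injective ((intervalModule k T J hJ).map s t h) := fun f g hfg => by
  have := congrFun hfg ⟨ht⟩
  rw [intervalModule_map_apply, intervalModule_map_apply, dif_pos hs, dif_pos hs] at this
  exact funext fun _ => this

end IntervalModule

section PersistenceMeasure

variable {k : Type} [Field k] (V : PersMod k ℝ)

lemma persIm_coe {r c : ℝ} (h : r ≤ c) : persIm V r c = LinearMap.range (V.map r c h) := by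
  have hp : ∃ x : ℝ, (r : EReal) = x ∧ x ≤ c := ⟨r, rfl, h⟩
  have key : ∀ (s : ℝ) (hs : s ≤ c), s = r →
      LinearMap.range (V.map s c hs) = LinearMap.range (V.map r c h) := by
    rintro s hs rfl; rfl
  exact (dif_pos hp).trans (key _ _ (by exact_mod_cast hp.choose_spec.1.symm))

lemma persIm_bot (c : ℝ) : persIm V ⊥ c = ⊥ :=
  dif_neg fun ⟨_, h, _⟩ => EReal.bot_ne_coe _ h

lemma persKer_coe {c r : ℝ} (h : c ≤ r) : persKer V c r = LinearMap.ker (V.map c r h) := by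
  have hp : ∃ x : ℝ, (r : EReal) = x ∧ c ≤ x := ⟨r, rfl, h⟩
  have key : ∀ (s : ℝ) (hs : c ≤ s), s = r →
      LinearMap.ker (V.map c s hs) = LinearMap.ker (V.map c r h) := by
    rintro s hs rfl; rfl
  exact (dif_pos hp).trans (key _ _ (by exact_mod_cast hp.choose_spec.1.symm))

lemma persKer_top (c : ℝ) : persKer V c ⊤ = ⊤ :=
  dif_neg fun ⟨_, h, _⟩ => EReal.top_ne_coe _ h

end PersistenceMeasure

section Quotient

variable {k M : Type} [Field k] [AddCommGroup M] [Module k M]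

lemma edim_quotient_comap_subtype_eq_zero {N P : Submodule k M} (h : N ≤ P) :
    edim k (N ⧸ Submodule.comap N.subtype P) = 0 := by
  have : Subsingleton (N ⧸ Submodule.comap N.subtype P) :=
    Submodule.Quotient.subsingleton_iff.mpr (eq_top_iff.mpr fun x _ => h x.2)
  rw [edim, rank_subsingleton', map_zero]

lemma edim_quotient_comap_subtype_top_bot :
    edim k ((⊤ : Submodule k M) ⧸ Submodule.comap (⊤ : Submodule k M).subtype ⊥) = edim k M := by
  rw [edim, edim, (Submodule.quotEquivOfEqBot _ (by simp)).rank_eq, rank_top]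

end Quotient

section IntervalModuleMeasure

variable {k : Type} [Field k] {J : Set ℝ} (hJ : IsIntervalSet J)

lemma persIm_intervalModule_eq_top {r c : ℝ} (hr : r ∈ J) (hrc : r ≤ c) :
    persIm (intervalModule k ℝ J hJ) r c = ⊤ := by
  rw [persIm_coe _ hrc, LinearMap.range_eq_top]
  exact intervalModule_map_surjective hJ hrc hr

lemma persIm_intervalModule_eq_bot {x : EReal} {c : ℝ} (hx : x ∉ ((↑) : ℝ → EReal) '' J)
    (hxc : x ≤ c) : persIm (intervalModule k ℝ J hJ) x c = ⊥ := by
  induction x using EReal.rec with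
  | bot => exact persIm_bot _ c
  | coe r =>
    rw [persIm_coe _ (EReal.coe_le_coe_iff.1 hxc),
      intervalModule_map_eq_zero hJ _ fun hr => hx ⟨r, hr, rfl⟩, LinearMap.range_zero]
  | top => exact absurd hxc (by simp)

lemma persKer_intervalModule_eq_bot {c r : ℝ} (hc : c ∈ J) (hr : r ∈ J) (hcr : c ≤ r) :
    persKer (intervalModule k ℝ J hJ) c r = ⊥ := by
  rw [persKer_coe _ hcr, LinearMap.ker_eq_bot]
  exact intervalModule_map_injective hJ hcr hc hr

lemma persKer_intervalModule_eq_top {c : ℝ} {x : EReal} (hx : x ∉ ((↑) : ℝ → EReal) '' J)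
    (hcx : c ≤ x) : persKer (intervalModule k ℝ J hJ) c x = ⊤ := by
  induction x using EReal.rec with
  | bot => exact absurd hcx (by simp)
  | coe r =>
    have := intervalModule_subsingleton_space (k := k) hJ fun hr => hx ⟨r, hr, rfl⟩
    rw [persKer_coe _ (EReal.coe_le_coe_iff.1 hcx), LinearMap.ker_eq_top]
    exact Subsingleton.elim _ _
  | top => exact persKer_top _ c

end IntervalModuleMeasure

namespace IsIntervalSet

variable {J : Set ℝ} {x : ℝ}

lemma lt_coe_of_mem (hJ : IsIntervalSet J) {a : EReal} {b : ℝ} (hb : b ∈ J) (hab : a < b)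
    (ha : a ∉ ((↑) : ℝ → EReal) '' J) (hx : x ∈ J) : a < x := by
  by_contra! hxa
  induction a using EReal.rec with
  | bot => exact EReal.coe_ne_bot x (le_bot_iff.1 hxa)
  | coe r =>
    exact ha ⟨r, hJ.2 hx hb (EReal.coe_le_coe_iff.1 hxa) (EReal.coe_lt_coe_iff.1 hab).le, rfl⟩
  | top => exact not_top_lt hab

lemma coe_lt_of_mem (hJ : IsIntervalSet J) {c : ℝ} {d : EReal} (hc : c ∈ J) (hcd : c < d)
    (hd : d ∉ ((↑) : ℝ → EReal) '' J) (hx : x ∈ J) : (x : EReal) < d := by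
  by_contra! hdx
  induction d using EReal.rec with
  | bot => exact not_lt_bot hcd
  | coe r =>
    exact hd ⟨r, hJ.2 hc hx (EReal.coe_lt_coe_iff.1 hcd).le (EReal.coe_le_coe_iff.1 hdx), rfl⟩
  | top => exact EReal.coe_ne_top x (top_le_iff.1 hdx)

end IsIntervalSet

theorem stmt6 (k : Type) [Field k] (J : Set ℝ) (hJ : IsIntervalSet J)
    (a : EReal) (b c : ℝ) (d : EReal)
    (hab : a < (b : EReal)) (hbc : b ≤ c) (hcd : (c : EReal) < d) :
    ((Set.Icc b c ⊆ J ∧ ∀ x ∈ J, a < (x : EReal) ∧ (x : EReal) < d) →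
       persMeasure (intervalModule k ℝ J hJ) a b c d = 1) ∧
    (¬(Set.Icc b c ⊆ J ∧ ∀ x ∈ J, a < (x : EReal) ∧ (x : EReal) < d) →
       persMeasure (intervalModule k ℝ J hJ) a b c d = 0) := by
  have hbc' : (b : EReal) ≤ c := EReal.coe_le_coe_iff.2 hbc
  have hac : a ≤ c := hab.le.trans hbc'
  refine ⟨fun ⟨hIcc, hJad⟩ => ?_, fun hnot => ?_⟩
  · rw [persMeasure, persIm_intervalModule_eq_top hJ (hIcc ⟨le_rfl, hbc⟩) hbc,
      persKer_intervalModule_eq_top hJ (fun ⟨r, hr, hrd⟩ => (hJad r hr).2.ne hrd) hcd.le,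
      persIm_intervalModule_eq_bot hJ (fun ⟨r, hr, hra⟩ => (hJad r hr).1.ne' hra) hac,
      top_inf_eq, bot_inf_eq, edim_quotient_comap_subtype_top_bot,
      edim_intervalModule_space hJ (hIcc ⟨hbc, le_rfl⟩)]
  rw [persMeasure]
  apply edim_quotient_comap_subtype_eq_zero
  by_cases hcJ : c ∈ J
  swap
  · have := intervalModule_subsingleton_space (k := k) hJ hcJ
    exact fun x _ => Subsingleton.elim x 0 ▸ zero_mem _
  by_cases hbJ : b ∈ J
  swap
  · rw [persIm_intervalModule_eq_bot hJ (EReal.coe_injective.mem_set_image.not.2 hbJ) hbc',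
      bot_inf_eq]
    exact bot_le
  by_cases haJ : a ∈ ((↑) : ℝ → EReal) '' J
  · obtain ⟨r, hr, rfl⟩ := haJ
    rw [persIm_intervalModule_eq_top hJ hr (EReal.coe_le_coe_iff.1 hac), top_inf_eq]
    exact inf_le_right
  by_cases hdJ : d ∈ ((↑) : ℝ → EReal) '' J
  · obtain ⟨r, hr, rfl⟩ := hdJ
    rw [persKer_intervalModule_eq_bot hJ hcJ hr (EReal.coe_le_coe_iff.1 hcd.le), inf_bot_eq]
    exact bot_le
  exact (hnot ⟨fun x hx => hJ.2 hbJ hcJ hx.1 hx.2,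
    fun x hx => ⟨hJ.lt_coe_of_mem hbJ hab haJ hx, hJ.coe_lt_of_mem hcJ hcd hdJ hx⟩⟩).elim
end
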